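/- Let m, n be nonzero integers with |m| < |n|, let h = gcd(|m|,|n|), p = |m|/h, q = |n|/h, and let d ≥ 1 be an integer. Then in BS(m,n): the set of integers s such that t^{−d} a^s t^{d} belongs to the cyclic subgroup ⟨a⟩ is exactly the set of integer multiples of h·q^d, and the set of integers s such that t^{d} a^s t^{−d} belongs to ⟨a⟩ is exactly the set of integer multiples of h·p^d. -/

import Mathlib

/-- The single defining relator `t a^m t⁻¹ (a^n)⁻¹` of the Baumslag–Solitar group `BS(m,n)`,
as an element of the free group on `Bool`, where `false` stands for the generator `a` and
`true` for the generator `t`. -/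
def bsRel (m n : ℤ) : FreeGroup Bool :=
  FreeGroup.of true * FreeGroup.of false ^ m * (FreeGroup.of true)⁻¹ *
    (FreeGroup.of false ^ n)⁻¹

/-- The Baumslag–Solitar group `BS(m,n) = ⟨a, t ∣ t a^m t⁻¹ = a^n⟩`. -/
abbrev BS (m n : ℤ) : Type := PresentedGroup ({bsRel m n} : Set (FreeGroup Bool))

/-- The generator `a` of `BS(m,n)`. -/
def BS.a (m n : ℤ) : BS m n := PresentedGroup.of false

/-- The generator `t` (stable letter) of `BS(m,n)`. -/
def BS.t (m n : ℤ) : BS m n := PresentedGroup.of true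

/-- The `a`-line through `g` in `BS(m,n)`: the left coset `g⟨a⟩`. -/
def aLine (m n : ℤ) (g : BS m n) : Set (BS m n) := {x | ∃ i : ℤ, x = g * BS.a m n ^ i}

/-- The `t`-line through `g` in `BS(m,n)`: the left coset `g⟨t⟩`. -/
def tLine (m n : ℤ) (g : BS m n) : Set (BS m n) := {x | ∃ i : ℤ, x = g * BS.t m n ^ i}

/-- A standard line in `BS(m,n)` is an `a`-line or a `t`-line. -/
def IsStandardLine (m n : ℤ) (ℓ : Set (BS m n)) : Prop :=
  (∃ g, ℓ = aLine m n g) ∨ (∃ g, ℓ = tLine m n g)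

/-- A map `BS(m,n) → BS(m',n')` is line-preserving if the image of every standard line is a
standard line. -/
def LinePreserving {m n m' n' : ℤ} (φ : BS m n → BS m' n') : Prop :=
  ∀ ℓ : Set (BS m n), IsStandardLine m n ℓ → IsStandardLine m' n' (φ '' ℓ)

/-!
`BS(m,n)` maps to the HNN extension of `ℤ` along `mℤ ≅ nℤ` (with `a ↦ 1`, `t ↦ t`), and there
Britton's lemma shows that `t^{-d} a^s t^d` can only lie in the base group if `n ∣ s`. For
`s = n k` the relation gives `t^{-d} a^{nk} t^d = t^{-(d-1)} a^{mk} t^{d-1}`, so by induction on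
`d` the admissible `s` are the multiples of `n` with `h q^{d-1} ∣ m k`; as `p` and `q` are
coprime, these are exactly the multiples of `h q^d`. The second family is the first one for
`BS(n,m)`, transported along the isomorphism `a ↦ a`, `t ↦ t⁻¹`.
-/

open Multiplicative

namespace HNNExtension

open NormalWord

variable {G : Type*} [Group G] {A B : Subgroup G} {φ : A ≃* B}

theorem mem_toSubgroup_of_conj_t_zpow_mem_range (u : ℤˣ) {k : ℕ} (hk : k ≠ 0) (g : G)
    (h : t ^ ((u : ℤ) * k) * of g * t ^ (-((u : ℤ) * k)) ∈
      (of.range : Subgroup (HNNExtension G A B φ))) :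
    g ∈ toSubgroup A B u := by
  by_contra hg
  obtain ⟨j, rfl⟩ := Nat.exists_eq_add_one_of_ne_zero hk
  -- `t^u ⋯ t^u g t^{-u} ⋯ t^{-u}` is reduced precisely because `g ∉ toSubgroup A B u`
  let w : ReducedWord G A B :=
    ⟨1, List.replicate j (u, 1) ++ (u, g) :: List.replicate (j + 1) (-u, 1), by
      simp [List.isChain_append, List.isChain_cons, List.isChain_replicate_of_rel,
        List.getLast?_replicate, hg]⟩
  have hprod : w.prod φ = t ^ ((u : ℤ) * (j + 1 : ℕ)) * of g * t ^ (-((u : ℤ) * (j + 1 : ℕ))) := by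
    simp only [ReducedWord.prod, w, map_one, one_mul, mul_one, List.map_append,
      List.map_replicate, List.map_cons, List.prod_append, List.prod_replicate, List.prod_cons,
      Units.val_neg, zpow_neg, inv_pow]
    group
  simpa [w] using ReducedWord.toList_eq_nil_of_mem_of_range φ w (hprod ▸ h)

end HNNExtension

namespace Int

variable {m n : ℤ}

theorem gcd_mul_abs_div_gcd_pow_succ_dvd_mul_iff (hm : m ≠ 0) (hn : n ≠ 0) (d : ℕ) (k : ℤ) :
    (m.gcd n : ℤ) * (|n| / m.gcd n) ^ (d + 1) ∣ n * k ↔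
      (m.gcd n : ℤ) * (|n| / m.gcd n) ^ d ∣ m * k := by
  set g : ℤ := (m.gcd n : ℤ)
  set p := |m| / g
  set q := |n| / g
  have hg : g ≠ 0 := by simp [g, Int.gcd_eq_zero_iff, hm]
  have hgp : g * p = |m| := Int.mul_ediv_cancel' ((dvd_abs _ _).2 (Int.gcd_dvd_left m n))
  have hgq : g * q = |n| := Int.mul_ediv_cancel' ((dvd_abs _ _).2 (Int.gcd_dvd_right m n))
  have hq : q ≠ 0 := right_ne_zero_of_mul (hgq ▸ abs_ne_zero.2 hn)
  have hpq : IsCoprime p q := by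
    have habs : Int.gcd |m| |n| = m.gcd n := by
      rw [Int.abs_eq_natAbs, Int.abs_eq_natAbs, Int.gcd_natCast_natCast]
      rfl
    have h := Int.gcd_div_gcd_div_gcd (i := |m|) (j := |n|) (by simp [Int.gcd_pos_iff, hm])
    rw [habs] at h
    exact Int.isCoprime_iff_gcd_eq_one.2 h
  rw [← dvd_abs _ (n * k), ← dvd_abs _ (m * k), abs_mul, abs_mul, ← hgp, ← hgq, mul_assoc,
    mul_assoc, mul_dvd_mul_iff_left hg, mul_dvd_mul_iff_left hg, pow_succ',
    mul_dvd_mul_iff_left hq, iff_comm]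
  exact ⟨(IsCoprime.pow_left hpq.symm).dvd_of_dvd_mul_left, dvd_mul_of_dvd_right⟩

theorem dvd_of_gcd_mul_abs_div_gcd_pow_succ_dvd {s : ℤ} (d : ℕ)
    (h : (m.gcd n : ℤ) * (|n| / m.gcd n) ^ (d + 1) ∣ s) : n ∣ s := by
  rw [pow_succ', ← mul_assoc, Int.mul_ediv_cancel' ((dvd_abs _ _).2 (Int.gcd_dvd_right m n))] at h
  exact (abs_dvd _ _).1 (dvd_of_mul_right_dvd h)

end Int

namespace BS

variable {m n : ℤ}

theorem t_mul_a_zpow_mul_t_inv : t m n * a m n ^ m * (t m n)⁻¹ = a m n ^ n := by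
  simpa [BS.a, BS.t, PresentedGroup.of] using PresentedGroup.mk_eq_mk_of_mul_inv_mem
    (x := FreeGroup.of true * FreeGroup.of false ^ m * (FreeGroup.of true)⁻¹)
    (y := FreeGroup.of false ^ n) (Set.mem_singleton (bsRel m n))

theorem t_inv_mul_a_zpow_mul_t (k : ℤ) :
    (t m n)⁻¹ * a m n ^ (n * k) * t m n = a m n ^ (m * k) := by
  rw [zpow_mul, zpow_mul, ← t_mul_a_zpow_mul_t_inv, conj_zpow]
  group

theorem conj_t_zpow_succ_a_zpow_mul (d : ℕ) (k : ℤ) :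
    t m n ^ (-((d + 1 : ℕ) : ℤ)) * a m n ^ (n * k) * t m n ^ ((d + 1 : ℕ) : ℤ) =
      t m n ^ (-(d : ℤ)) * a m n ^ (m * k) * t m n ^ (d : ℤ) := by
  rw [← t_inv_mul_a_zpow_mul_t]
  push_cast
  group

def lift {H : Type*} [Group H] (x y : H) (hxy : y * x ^ m * y⁻¹ = x ^ n) : BS m n →* H :=
  PresentedGroup.toGroup (f := fun b => cond b y x) <| by
    rintro r rfl
    simp [bsRel, hxy]

section lift

variable {H : Type*} [Group H] {x y : H} {hxy : y * x ^ m * y⁻¹ = x ^ n}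

@[simp]
theorem lift_a : lift x y hxy (a m n) = x := PresentedGroup.toGroup.of _

@[simp]
theorem lift_t : lift x y hxy (t m n) = y := PresentedGroup.toGroup.of _

theorem hom_ext {f g : BS m n →* H} (ha : f (a m n) = g (a m n)) (ht : f (t m n) = g (t m n)) :
    f = g :=
  PresentedGroup.ext fun b => b.casesOn ha ht

end lift

variable (m n) in
def swap : BS m n →* BS n m :=
  lift (a n m) (t n m)⁻¹ <| by
    rw [← t_mul_a_zpow_mul_t_inv]
    group

@[simp]
theorem swap_a : swap m n (a m n) = a n m := lift_a

@[simp]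
theorem swap_t : swap m n (t m n) = (t n m)⁻¹ := lift_t

theorem swap_swap (g : BS m n) : swap n m (swap m n g) = g :=
  DFunLike.congr_fun (hom_ext (f := (swap n m).comp (swap m n)) (g := .id _) (by simp) (by simp)) g

theorem swap_mem_zpowers_a_iff {g : BS m n} :
    swap m n g ∈ Subgroup.zpowers (a n m) ↔ g ∈ Subgroup.zpowers (a m n) := by
  refine ⟨fun ⟨k, hk⟩ => ⟨k, ?_⟩, fun ⟨k, hk⟩ => ⟨k, by simp [← hk]⟩⟩
  rw [← swap_swap g, ← hk]
  simp

theorem swap_conj_t_zpow (d s : ℤ) :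
    swap m n (t m n ^ d * a m n ^ s * t m n ^ (-d)) = t n m ^ (-d) * a n m ^ s * t n m ^ d := by
  simp [inv_zpow']

def mulLeftHom (k : ℤ) : Multiplicative ℤ →* Multiplicative ℤ :=
  AddMonoidHom.toMultiplicative (AddMonoidHom.mulLeft k)

@[simp]
theorem mulLeftHom_ofAdd (k j : ℤ) : mulLeftHom k (ofAdd j) = ofAdd (k * j) := rfl

theorem mulLeftHom_injective {k : ℤ} (hk : k ≠ 0) : Function.Injective (mulLeftHom k) :=
  fun _ _ h => toAdd.injective (mul_left_cancel₀ hk (ofAdd.injective h))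

noncomputable def scaleEquiv (hm : m ≠ 0) (hn : n ≠ 0) :
    (mulLeftHom m).range ≃* (mulLeftHom n).range :=
  (MonoidHom.ofInjective (mulLeftHom_injective hm)).symm.trans
    (MonoidHom.ofInjective (mulLeftHom_injective hn))

theorem scaleEquiv_ofInjective (hm : m ≠ 0) (hn : n ≠ 0) (x : Multiplicative ℤ) :
    scaleEquiv hm hn (MonoidHom.ofInjective (mulLeftHom_injective hm) x) =
      MonoidHom.ofInjective (mulLeftHom_injective hn) x := by
  simp [scaleEquiv]

abbrev HNN (hm : m ≠ 0) (hn : n ≠ 0) : Type :=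
  HNNExtension (Multiplicative ℤ) (mulLeftHom m).range (mulLeftHom n).range (scaleEquiv hm hn)

noncomputable def toHNN (hm : m ≠ 0) (hn : n ≠ 0) : BS m n →* HNN hm hn :=
  lift (HNNExtension.of (ofAdd 1)) HNNExtension.t <| by
    have h := HNNExtension.equiv_eq_conj (φ := scaleEquiv hm hn)
      (MonoidHom.ofInjective (mulLeftHom_injective hm) (ofAdd 1))
    rw [scaleEquiv_ofInjective, MonoidHom.ofInjective_apply, MonoidHom.ofInjective_apply] at h
    simpa [← map_zpow, ← ofAdd_zsmul] using h.symm

theorem toHNN_a_zpow (hm : m ≠ 0) (hn : n ≠ 0) (s : ℤ) :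
    toHNN hm hn (a m n ^ s) = HNNExtension.of (ofAdd s) := by
  rw [toHNN, map_zpow, lift_a, ← map_zpow, ← ofAdd_zsmul, smul_eq_mul, mul_one]

theorem toHNN_t (hm : m ≠ 0) (hn : n ≠ 0) : toHNN hm hn (t m n) = HNNExtension.t := lift_t

theorem dvd_of_conj_t_zpow_mem_zpowers (hm : m ≠ 0) (hn : n ≠ 0) {d : ℕ} (hd : d ≠ 0) {s : ℤ}
    (h : t m n ^ (-(d : ℤ)) * a m n ^ s * t m n ^ (d : ℤ) ∈ Subgroup.zpowers (a m n)) :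
    n ∣ s := by
  obtain ⟨k, hk⟩ := h
  have hmem : HNNExtension.t ^ (((-1 : ℤˣ) : ℤ) * d) * HNNExtension.of (ofAdd s) *
      HNNExtension.t ^ (-(((-1 : ℤˣ) : ℤ) * d)) ∈ (HNNExtension.of.range : Subgroup (HNN hm hn)) :=
    ⟨ofAdd k, by simpa [toHNN_a_zpow, toHNN_t] using congrArg (toHNN hm hn) hk⟩
  obtain ⟨j, hj⟩ := HNNExtension.mem_toSubgroup_of_conj_t_zpow_mem_range (-1) hd _ hmem
  exact ⟨toAdd j, ofAdd.injective hj.symm⟩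
theorem conj_t_zpow_succ_mem_zpowers_iff_of (hm : m ≠ 0) (hn : n ≠ 0) (d : ℕ)
    (hS : ∀ k, t m n ^ (-(d : ℤ)) * a m n ^ (m * k) * t m n ^ (d : ℤ) ∈ Subgroup.zpowers (a m n) ↔
      (m.gcd n : ℤ) * (|n| / m.gcd n) ^ d ∣ m * k) (s : ℤ) :
    t m n ^ (-((d + 1 : ℕ) : ℤ)) * a m n ^ s * t m n ^ ((d + 1 : ℕ) : ℤ) ∈
        Subgroup.zpowers (a m n) ↔ (m.gcd n : ℤ) * (|n| / m.gcd n) ^ (d + 1) ∣ s := by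
  have key (k : ℤ) :
      t m n ^ (-((d + 1 : ℕ) : ℤ)) * a m n ^ (n * k) * t m n ^ ((d + 1 : ℕ) : ℤ) ∈
        Subgroup.zpowers (a m n) ↔ (m.gcd n : ℤ) * (|n| / m.gcd n) ^ (d + 1) ∣ n * k := by
    rw [conj_t_zpow_succ_a_zpow_mul, hS, Int.gcd_mul_abs_div_gcd_pow_succ_dvd_mul_iff hm hn]
  constructor
  · intro h
    obtain ⟨k, rfl⟩ := dvd_of_conj_t_zpow_mem_zpowers hm hn d.succ_ne_zero h
    exact (key k).1 h
  · intro h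
    obtain ⟨k, rfl⟩ := Int.dvd_of_gcd_mul_abs_div_gcd_pow_succ_dvd d h
    exact (key k).2 h

theorem conj_t_zpow_succ_mem_zpowers_iff (hm : m ≠ 0) (hn : n ≠ 0) (d : ℕ) (s : ℤ) :
    t m n ^ (-((d + 1 : ℕ) : ℤ)) * a m n ^ s * t m n ^ ((d + 1 : ℕ) : ℤ) ∈
        Subgroup.zpowers (a m n) ↔ (m.gcd n : ℤ) * (|n| / m.gcd n) ^ (d + 1) ∣ s := by
  induction d generalizing s with
  | zero =>
    refine conj_t_zpow_succ_mem_zpowers_iff_of hm hn 0 (fun k => iff_of_true ?_ ?_) s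
    · simp [Subgroup.zpow_mem_zpowers]
    · simpa using (Int.gcd_dvd_left m n).mul_right k
  | succ d ih => exact conj_t_zpow_succ_mem_zpowers_iff_of hm hn (d + 1) (fun k => ih (m * k)) s

end BS

theorem conjugate_power_in_aSubgroup_iff_general (m n : ℤ) (hm : m ≠ 0) (hn : n ≠ 0)
    (h p q : ℤ) (hh : h = Int.gcd m n) (hp : p = |m| / h) (hq : q = |n| / h)
    (d : ℕ) (hd : 1 ≤ d) :
    (∀ s : ℤ, BS.t m n ^ (-(d : ℤ)) * BS.a m n ^ s * BS.t m n ^ (d : ℤ) ∈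
        Subgroup.zpowers (BS.a m n) ↔ (h * q ^ d) ∣ s) ∧
    (∀ s : ℤ, BS.t m n ^ (d : ℤ) * BS.a m n ^ s * BS.t m n ^ (-(d : ℤ)) ∈
        Subgroup.zpowers (BS.a m n) ↔ (h * p ^ d) ∣ s) := by
  subst hh hp hq
  obtain ⟨d, rfl⟩ := Nat.exists_eq_add_of_le' hd
  refine ⟨BS.conj_t_zpow_succ_mem_zpowers_iff hm hn d, fun s => ?_⟩
  rw [← BS.swap_mem_zpowers_a_iff, BS.swap_conj_t_zpow, BS.conj_t_zpow_succ_mem_zpowers_iff hn hm,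
    Int.gcd_comm]

/-- Let `0 ≠ |m| < |n|`, `h = gcd(|m|,|n|)`, `p = |m|/h`, `q = |n|/h`, and
`d ≥ 1`. Then in `BS(m,n)`, `t^{-d} a^s t^{d} ∈ ⟨a⟩` if and only if `h·q^d ∣ s`, and
`t^{d} a^s t^{-d} ∈ ⟨a⟩` if and only if `h·p^d ∣ s`. -/
theorem conjugate_power_in_aSubgroup_iff (m n : ℤ) (hm : m ≠ 0) (hn : n ≠ 0) (hmn : |m| < |n|)
    (h p q : ℤ) (hh : h = Int.gcd m n) (hp : p = |m| / h) (hq : q = |n| / h)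
    (d : ℕ) (hd : 1 ≤ d) :
    (∀ s : ℤ, BS.t m n ^ (-(d : ℤ)) * BS.a m n ^ s * BS.t m n ^ (d : ℤ) ∈
        Subgroup.zpowers (BS.a m n) ↔ (h * q ^ d) ∣ s) ∧
    (∀ s : ℤ, BS.t m n ^ (d : ℤ) * BS.a m n ^ s * BS.t m n ^ (-(d : ℤ)) ∈
        Subgroup.zpowers (BS.a m n) ↔ (h * p ^ d) ∣ s) :=
  conjugate_power_in_aSubgroup_iff_general m n hm hn h p q hh hp hq d hd
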